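/- Let P = {x ∈ R^n : a_ℓ'x ≤ b_ℓ, ℓ = 1,…,r} be a nonempty polyhedral set and H_ℓ = {x : a_ℓ'x ≤ b_ℓ} the individual half-spaces. Then there exists c > 0, depending only on the vectors a_1,…,a_r, such that dist(x, P) ≤ c Σ_{ℓ=1}^r dist(x, H_ℓ) for all x ∈ R^n (Hoffman bound). -/

import Mathlib

open Function Set Metric Filter Topology
open scoped RealInnerProductSpace

/-!
Let `y` be the point of `P` nearest to `x`. The optimality condition at `y` and Farkas' lemma
(the cone spanned by the active normals is closed, by Carathéodory's theorem for cones) give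
`x - y = ∑ μᵢ aᵢ` with `μ ≥ 0` supported on constraints active at `y` whose normals are linearly
independent. On a linearly independent family the coefficients are at most `C ‖x - y‖`, and for an
active `i` we have `⟪aᵢ, x - y⟫ = ⟪aᵢ, x⟫ - bᵢ ≤ ‖aᵢ‖ dist(x, Hᵢ)`; hence
`‖x - y‖² = ∑ μᵢ ⟪aᵢ, x - y⟫ ≤ C ‖x - y‖ maxᵢ ‖aᵢ‖ ∑ᵢ dist(x, Hᵢ)`.
-/

section ConicCaratheodory

variable {ι E : Type*} [Fintype ι] [AddCommGroup E] [Module ℝ E]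

lemma exists_sub_smul_nonneg_support_ssubset {l g : ι → ℝ} (hl : 0 ≤ l)
    (hg : support g ⊆ support l) (hpos : ∃ i, 0 < g i) :
    ∃ t : ℝ, 0 ≤ l - t • g ∧ support (l - t • g) ⊂ support l := by
  classical
  obtain ⟨i₀, hi₀, hmin⟩ := Finset.exists_min_image {i | 0 < g i} (fun i => l i / g i)
    (by simpa [Finset.Nonempty] using hpos)
  simp only [Finset.mem_filter, Finset.mem_univ, true_and] at hi₀ hmin
  set t := l i₀ / g i₀
  have ht : 0 ≤ t := div_nonneg (hl i₀) hi₀.le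
  have hti₀ : t * g i₀ = l i₀ := div_mul_cancel₀ _ hi₀.ne'
  refine ⟨t, fun i => ?_, fun i hi => ?_, fun h => ?_⟩
  · simp only [Pi.zero_apply, Pi.sub_apply, Pi.smul_apply, smul_eq_mul, sub_nonneg]
    rcases le_or_gt (g i) 0 with hgi | hgi
    · nlinarith [show 0 ≤ l i from hl i]
    · exact (le_div_iff₀ hgi).1 (hmin i hgi)
  · by_contra hli
    have hgi : g i = 0 := notMem_support.1 fun h => hli (hg h)
    simp [notMem_support.1 hli, hgi] at hi
  · exact h (hg hi₀.ne') (by simp [hti₀])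

lemma exists_nonneg_support_ssubset_of_not_linearIndepOn (a : ι → E) {l : ι → ℝ}
    (hl : 0 ≤ l) (hdep : ¬LinearIndepOn ℝ a (support l)) :
    ∃ l' : ι → ℝ, 0 ≤ l' ∧ support l' ⊂ support l ∧ ∑ i, l' i • a i = ∑ i, l i • a i := by
  classical
  rw [← coe_toFinset (support l), not_linearIndepOn_finset_iff] at hdep
  obtain ⟨g, hg, i₀, hi₀, hgi₀⟩ := hdep
  -- dividing by `g i₀` makes the dependence positive at `i₀`
  set g' : ι → ℝ := fun i => if i ∈ support l then g i / g i₀ else 0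
  have hsum : ∑ i, g' i • a i = (g i₀)⁻¹ • ∑ i ∈ (support l).toFinset, g i • a i := by
    simp only [g', ite_smul, zero_smul, ← Finset.sum_filter, div_eq_inv_mul, mul_smul,
      ← Finset.smul_sum]
    congr; ext; simp
  rw [hg, smul_zero] at hsum
  obtain ⟨t, ht, hss⟩ := exists_sub_smul_nonneg_support_ssubset hl (g := g')
    (fun i hi => by_contra fun h' => mem_support.1 hi (if_neg h')) ⟨i₀, by simp_all [g']⟩
  refine ⟨l - t • g', ht, hss, ?_⟩
  simp [sub_smul, Finset.sum_sub_distrib, mul_smul, ← Finset.smul_sum, hsum]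

theorem exists_nonneg_linearIndepOn_support (a : ι → E) (l : ι → ℝ) (hl : 0 ≤ l) :
    ∃ μ : ι → ℝ, 0 ≤ μ ∧ support μ ⊆ support l ∧ LinearIndepOn ℝ a (support μ) ∧
      ∑ i, μ i • a i = ∑ i, l i • a i := by
  by_cases hind : LinearIndepOn ℝ a (support l)
  · exact ⟨l, hl, subset_rfl, hind, rfl⟩
  obtain ⟨l', hl', hss, hsum⟩ := exists_nonneg_support_ssubset_of_not_linearIndepOn a hl hind
  obtain ⟨μ, hμ, hμl', hμind, hμsum⟩ := exists_nonneg_linearIndepOn_support a l' hl'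
  exact ⟨μ, hμ, hμl'.trans hss.subset, hμind, hμsum.trans hsum⟩
termination_by (support l).ncard
decreasing_by exact ncard_lt_ncard hss

end ConicCaratheodory

namespace PointedCone

variable {ι E : Type*} [Fintype ι]

section Algebraic
variable [AddCommGroup E] [Module ℝ E]

lemma mem_hull_image_iff {v : ι → E} {S : Set ι} {z : E} :
    z ∈ hull ℝ (v '' S) ↔ ∃ l : ι → ℝ, 0 ≤ l ∧ support l ⊆ S ∧ ∑ i, l i • v i = z := by
  classical
  constructor
  · intro hz
    induction hz using Submodule.span_induction with
    | mem _ hz =>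
      obtain ⟨i, hi, rfl⟩ := hz
      refine ⟨Pi.single i 1, ?_, ?_, by simp⟩
      · exact Pi.single_nonneg.2 zero_le_one
      · exact Pi.support_single_subset.trans (singleton_subset_iff.2 hi)
    | zero => exact ⟨0, le_rfl, by simp, by simp⟩
    | add _ _ _ _ h₁ h₂ =>
      obtain ⟨l₁, hl₁, hS₁, rfl⟩ := h₁
      obtain ⟨l₂, hl₂, hS₂, rfl⟩ := h₂
      exact ⟨l₁ + l₂, add_nonneg hl₁ hl₂, (support_add _ _).trans (union_subset hS₁ hS₂),
        by simp [add_smul, Finset.sum_add_distrib]⟩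
    | smul c _ _ h =>
      obtain ⟨l, hl, hS, rfl⟩ := h
      exact ⟨(c : ℝ) • l, smul_nonneg c.2 hl, (support_const_smul_subset _ _).trans hS,
        by simp [Finset.smul_sum, mul_smul, Nonneg.coe_smul]⟩
  · rintro ⟨l, hl, hS, rfl⟩
    refine Submodule.sum_mem _ fun i _ => ?_
    by_cases hi : l i = 0
    · simp [hi]
    · exact smul_mem _ (hl i) (subset_hull ⟨i, hS hi, rfl⟩)

end Algebraic

variable [NormedAddCommGroup E] [NormedSpace ℝ E]

lemma isClosed_hull_range_of_linearIndependent {b : ι → E} (hb : LinearIndependent ℝ b) :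
    IsClosed (hull ℝ (range b) : Set E) := by
  have : (hull ℝ (range b) : Set E) = Fintype.linearCombination ℝ b '' Ici 0 := by
    ext z
    simp [← image_univ, mem_hull_image_iff, Fintype.linearCombination_apply]
  rw [this]
  exact (LinearMap.isClosedEmbedding_of_injective (LinearMap.ker_eq_bot.2
    (linearIndependent_iff_injective_fintypeLinearCombination.1 hb))).isClosedMap _ isClosed_Ici

lemma isClosed_hull_image (v : ι → E) (S : Set ι) : IsClosed (hull ℝ (v '' S) : Set E) := by
  classical
  have : (hull ℝ (v '' S) : Set E) =
      ⋃ (T : Set ι) (_ : LinearIndepOn ℝ v T ∧ T ⊆ S), hull ℝ (v '' T) := by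
    refine Subset.antisymm (fun z hz => ?_)
      (iUnion₂_subset fun T hT => Submodule.span_mono (image_mono hT.2))
    obtain ⟨l, hl, hlS, rfl⟩ := mem_hull_image_iff.1 hz
    obtain ⟨μ, hμ, hμl, hμind, hμsum⟩ := exists_nonneg_linearIndepOn_support v l hl
    exact mem_iUnion₂.2 ⟨support μ, ⟨hμind, hμl.trans hlS⟩,
      mem_hull_image_iff.2 ⟨μ, hμ, subset_rfl, hμsum⟩⟩
  rw [this]
  refine isClosed_iUnion_of_finite fun T => isClosed_iUnion_of_finite fun hT => ?_
  rw [image_eq_range]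
  exact isClosed_hull_range_of_linearIndependent hT.1

end PointedCone

section CoefficientBound

variable {ι E : Type*} [Fintype ι] [NormedAddCommGroup E] [NormedSpace ℝ E]

lemma exists_abs_le_mul_norm_sum (a : ι → E) :
    ∃ C > 0, ∀ l : ι → ℝ, LinearIndepOn ℝ a (support l) →
      ∀ i, |l i| ≤ C * ‖∑ i, l i • a i‖ := by
  classical
  have hbound : ∀ S : Set ι, ∃ K : ℝ, LinearIndepOn ℝ a S →
      ∀ l : S → ℝ, ‖l‖ ≤ K * ‖∑ j, l j • a j‖ := by
    intro S
    by_cases hS : LinearIndepOn ℝ a S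
    · obtain ⟨K, -, hK⟩ := (Fintype.linearCombination ℝ fun j : S => a j).exists_antilipschitzWith
        (LinearMap.ker_eq_bot.2 (linearIndependent_iff_injective_fintypeLinearCombination.1 hS))
      exact ⟨K, fun _ l => by
        simpa [Fintype.linearCombination_apply] using ZeroHomClass.bound_of_antilipschitz _ hK l⟩
    · exact ⟨0, fun h => absurd h hS⟩
  choose K hK using hbound
  obtain ⟨C, hC⟩ := Finite.exists_le K
  refine ⟨max C 1, by positivity, fun l hl i => ?_⟩
  by_cases hi : l i = 0
  · rw [hi, abs_zero]; positivity
  have hsum : ∑ j : support l, l j • a j = ∑ i, l i • a i := by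
    rw [Finset.sum_set_coe (f := fun i => l i • a i)]
    exact Finset.sum_subset (Finset.subset_univ _) fun j _ hj => by simp_all
  calc |l i| = ‖(fun j : support l => l j) ⟨i, hi⟩‖ := rfl
    _ ≤ ‖fun j : support l => l j‖ := norm_le_pi_norm (fun j : support l => l j) _
    _ ≤ K (support l) * ‖∑ i, l i • a i‖ := hsum ▸ hK _ hl _
    _ ≤ max C 1 * ‖∑ i, l i • a i‖ := by gcongr; exact (hC _).trans (le_max_left _ _)

end CoefficientBound

section Polyhedron

variable {ι E : Type*} [NormedAddCommGroup E] [InnerProductSpace ℝ E]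

lemma inner_sub_le_norm_mul_infDist (a x : E) {b : ℝ} (hne : {z : E | ⟪a, z⟫ ≤ b}.Nonempty) :
    ⟪a, x⟫ - b ≤ ‖a‖ * infDist x {z | ⟪a, z⟫ ≤ b} := by
  rcases (norm_nonneg a).eq_or_lt with ha | ha
  · obtain ⟨z, hz⟩ := hne
    rw [eq_comm, norm_eq_zero] at ha
    simp_all
  · rw [← div_le_iff₀' ha, le_infDist hne]
    intro z (hz : ⟪a, z⟫ ≤ b)
    rw [div_le_iff₀' ha, dist_eq_norm]
    calc ⟪a, x⟫ - b ≤ ⟪a, x - z⟫ := by rw [inner_sub_right]; linarith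
      _ ≤ ‖a‖ * ‖x - z‖ := real_inner_le_norm a _

def polyhedron (a : ι → E) (b : ι → ℝ) : Set E := {x | ∀ i, ⟪a i, x⟫ ≤ b i}

lemma isClosed_polyhedron (a : ι → E) (b : ι → ℝ) : IsClosed (polyhedron a b) := by
  rw [polyhedron, ofPred_forall]
  exact isClosed_iInter fun i => isClosed_le (by fun_prop) continuous_const

lemma convex_polyhedron (a : ι → E) (b : ι → ℝ) : Convex ℝ (polyhedron a b) := by
  rw [polyhedron, ofPred_forall]
  exact convex_iInter fun i => convex_halfSpace_le (innerₗ E (a i)).isLinear (b i)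

variable [Fintype ι] {a : ι → E} {b : ι → ℝ} {x y v : E}

lemma exists_pos_add_smul_mem_polyhedron (hy : y ∈ polyhedron a b)
    (hv : ∀ i, ⟪a i, y⟫ = b i → ⟪a i, v⟫ ≤ 0) : ∃ t : ℝ, 0 < t ∧ y + t • v ∈ polyhedron a b := by
  suffices ∀ᶠ t in 𝓝[>] (0 : ℝ), y + t • v ∈ polyhedron a b from
    (this.and self_mem_nhdsWithin).exists.imp fun t ht => ⟨ht.2, ht.1⟩
  refine eventually_all.2 fun i => ?_
  rcases (hy i).eq_or_lt with hi | hi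
  · filter_upwards [self_mem_nhdsWithin] with t (ht : 0 < t)
    rw [inner_add_right, real_inner_smul_right, hi]
    nlinarith [hv i hi]
  · refine nhdsWithin_le_nhds (Tendsto.eventually_le_const hi ?_)
    exact (by fun_prop : Continuous fun t : ℝ => ⟪a i, y + t • v⟫).tendsto' 0 _ (by simp)

lemma norm_sub_sq_le_sum_mul_infDist {μ : ι → ℝ} (hy : y ∈ polyhedron a b)
    (hμ : 0 ≤ μ) (hact : ∀ i, μ i ≠ 0 → ⟪a i, y⟫ = b i) (hsum : ∑ i, μ i • a i = x - y) :
    ‖x - y‖ ^ 2 ≤ ∑ i, μ i * (‖a i‖ * infDist x {z | ⟪a i, z⟫ ≤ b i}) := by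
  rw [← real_inner_self_eq_norm_sq, ← hsum, sum_inner]
  refine Finset.sum_le_sum fun i _ => ?_
  rw [hsum, real_inner_smul_left]
  by_cases hi : μ i = 0
  · simp [hi]
  refine mul_le_mul_of_nonneg_left ?_ (hμ i)
  rw [inner_sub_right, hact i hi]
  exact inner_sub_le_norm_mul_infDist _ _ ⟨y, hy i⟩

variable [CompleteSpace E]

lemma exists_infDist_eq_norm_sub_and_inner_le_zero {K : Set E} (hne : K.Nonempty)
    (hcl : IsClosed K) (hconv : Convex ℝ K) (x : E) :
    ∃ y ∈ K, infDist x K = ‖x - y‖ ∧ ∀ w ∈ K, ⟪x - y, w - y⟫ ≤ 0 := by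
  obtain ⟨y, hy, hmin⟩ := exists_norm_eq_iInf_of_complete_convex hne hcl.isComplete hconv x
  refine ⟨y, hy, ?_, (norm_eq_iInf_iff_real_inner_le_zero hconv hy).1 hmin⟩
  rw [infDist_eq_iInf, hmin]
  simp_rw [dist_eq_norm]

lemma sub_mem_hull_of_inner_le_zero (hy : y ∈ polyhedron a b)
    (hxy : ∀ w ∈ polyhedron a b, ⟪x - y, w - y⟫ ≤ 0) :
    x - y ∈ PointedCone.hull ℝ (a '' {i | ⟪a i, y⟫ = b i}) := by
  by_contra hnot
  obtain ⟨u, hu, hxu⟩ := ProperCone.hyperplane_separation'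
    ⟨_, PointedCone.isClosed_hull_image a {i | ⟪a i, y⟫ = b i}⟩ hnot
  obtain ⟨t, ht, hmem⟩ := exists_pos_add_smul_mem_polyhedron (v := -u) hy fun i hi => by
    have := hu (a i) (PointedCone.subset_hull ⟨i, hi, rfl⟩)
    rw [inner_neg_right]; linarith
  have := hxy _ hmem
  rw [add_sub_cancel_left, real_inner_smul_right, inner_neg_right] at this
  nlinarith

theorem exists_infDist_polyhedron_le_mul_sum (a : ι → E) :
    ∃ c > 0, ∀ b : ι → ℝ, (polyhedron a b).Nonempty → ∀ x : E,
      infDist x (polyhedron a b) ≤ c * ∑ i, infDist x {z | ⟪a i, z⟫ ≤ b i} := by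
  obtain ⟨C, hC, hbound⟩ := exists_abs_le_mul_norm_sum a
  obtain ⟨M, hM⟩ := Finite.exists_le fun i => ‖a i‖
  refine ⟨C * max M 1, by positivity, fun b hP x => ?_⟩
  obtain ⟨y, hy, hdist, hvar⟩ := exists_infDist_eq_norm_sub_and_inner_le_zero hP
    (isClosed_polyhedron a b) (convex_polyhedron a b) x
  obtain ⟨l, hl, hlact, hlsum⟩ :=
    PointedCone.mem_hull_image_iff.1 (sub_mem_hull_of_inner_le_zero hy hvar)
  obtain ⟨μ, hμ, hμl, hμind, hμsum⟩ := exists_nonneg_linearIndepOn_support a l hl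
  rw [hlsum] at hμsum
  set D := ∑ i, infDist x {z | ⟪a i, z⟫ ≤ b i}
  have hD : 0 ≤ D := Finset.sum_nonneg fun i _ => infDist_nonneg
  have hsq : ‖x - y‖ ^ 2 ≤ (C * max M 1 * D) * ‖x - y‖ := calc
    ‖x - y‖ ^ 2 ≤ ∑ i, μ i * (‖a i‖ * infDist x {z | ⟪a i, z⟫ ≤ b i}) :=
      norm_sub_sq_le_sum_mul_infDist hy hμ (fun i hi => hlact (hμl hi)) hμsum
    _ ≤ ∑ i, C * ‖x - y‖ * (max M 1 * infDist x {z | ⟪a i, z⟫ ≤ b i}) := by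
      refine Finset.sum_le_sum fun i _ => mul_le_mul ?_ ?_
        (mul_nonneg (norm_nonneg _) infDist_nonneg) (by positivity)
      · exact (le_abs_self _).trans (hμsum ▸ hbound μ hμind i)
      · exact mul_le_mul_of_nonneg_right ((hM i).trans (le_max_left _ _)) infDist_nonneg
    _ = (C * max M 1 * D) * ‖x - y‖ := by
      rw [← Finset.mul_sum, ← Finset.mul_sum]; ring
  have hc : 0 ≤ C * max M 1 * D := by positivity
  rw [hdist]
  nlinarith [norm_nonneg (x - y)]

end Polyhedron

/-- Hoffman bound: for a polyhedron `P = {x | ⟪aₗ, x⟫ ≤ bₗ, ℓ = 1,…,r}` there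
is `c > 0` depending only on the vectors `aₗ` such that whenever `P` is
nonempty, `dist(x, P) ≤ c ∑ₗ dist(x, Hₗ)` for all `x`, where `Hₗ` is the
`ℓ`-th half-space. -/
theorem stmt12 {n r : ℕ} (a : Fin r → EuclideanSpace ℝ (Fin n)) :
    ∃ c > (0 : ℝ), ∀ b : Fin r → ℝ,
      ({x : EuclideanSpace ℝ (Fin n) | ∀ ℓ, inner ℝ (a ℓ) x ≤ b ℓ}).Nonempty →
      ∀ x : EuclideanSpace ℝ (Fin n),
        infDist x {x : EuclideanSpace ℝ (Fin n) | ∀ ℓ, inner ℝ (a ℓ) x ≤ b ℓ}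
          ≤ c * ∑ ℓ, infDist x {x : EuclideanSpace ℝ (Fin n) |
              inner ℝ (a ℓ) x ≤ (b ℓ : ℝ)} :=
  exists_infDist_polyhedron_le_mul_sum a
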